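/- Let Σ ∈ R^{p×p} be the covariance of a mean-zero square-integrable random vector X, U ⊂ [p], i ∉ U, and β = Σ_{•i} − Σ_{•U} Σ_U⁺ Σ_{U,i}. Then Tr(Σ − Σ_{•,U∪{i}} Σ_{U∪{i}}⁺ Σ_{U∪{i},•}) = Tr(Σ − Σ_{•U} Σ_U⁺ Σ_{U•}) − (‖β‖₂²/β_i)·1{β_i > 0}. -/

import Mathlib

open MeasureTheory Matrix

/-- Moore–Penrose pseudoinverse of a real matrix, characterized by the four
Penrose equations (which have a unique solution over ℝ). -/
noncomputable def mpinv {m n : Type*} [Fintype m] [Fintype n] (A : Matrix m n ℝ) :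
    Matrix n m ℝ := by
  classical
  exact if h : ∃ B : Matrix n m ℝ,
      A * B * A = A ∧ B * A * B = B ∧ (A * B)ᵀ = A * B ∧ (B * A)ᵀ = B * A
    then h.choose else 0

/-- The matrix of cross second moments `E[Y Xᵀ]`. -/
noncomputable def crossMoment {Ω : Type*} [MeasurableSpace Ω] (μ : Measure Ω)
    {α β : Type*} (Y : Ω → α → ℝ) (X : Ω → β → ℝ) : Matrix α β ℝ :=
  Matrix.of fun i j => ∫ ω, Y ω i * X ω j ∂μ

/-!
Since `Σ` is a Gram matrix in `L²(μ)` it is positive semidefinite, so `Σ = Bᵀ B`. Then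
`Σ - Σ_{•V} Σ_V⁺ Σ_{V•} = Bᵀ (1 - P_V) B`, where `P_V` is the orthogonal projection onto the span
of the columns `b_j`, `j ∈ V`. With `r = b_i - P_U b_i`, one has
`P_{U ∪ {i}} = P_U + r rᵀ / ‖r‖²`, `β = Bᵀ r` and `β_i = ‖r‖²`, so the trace drops by
`‖Bᵀ r‖² / ‖r‖² = ‖β‖² / β_i`; when `r = 0` nothing changes and `β_i = 0`.
-/

namespace Submodule

theorem span_singleton_sub_sup {R M : Type*} [Ring R] [AddCommGroup M] [Module R M]
    {p : Submodule R M} (x : M) {y : M} (hy : y ∈ p) : (R ∙ (x - y)) ⊔ p = (R ∙ x) ⊔ p := by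
  refine le_antisymm (sup_le ?_ le_sup_right) (sup_le ?_ le_sup_right) <;>
    rw [span_singleton_le_iff_mem]
  · exact sub_mem (mem_sup_left (mem_span_singleton_self x)) (mem_sup_right hy)
  · simpa using add_mem (mem_sup_left (mem_span_singleton_self (x - y))) (mem_sup_right hy)

end Submodule

namespace Matrix

section Penrose

variable {m n : Type*} [Fintype m] [Fintype n]

def IsMoorePenrose (A : Matrix m n ℝ) (B : Matrix n m ℝ) : Prop :=
  A * B * A = A ∧ B * A * B = B ∧ (A * B)ᵀ = A * B ∧ (B * A)ᵀ = B * A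

theorem IsMoorePenrose.unique {A : Matrix m n ℝ} {B C : Matrix n m ℝ}
    (hB : IsMoorePenrose A B) (hC : IsMoorePenrose A C) : B = C := by
  obtain ⟨hB₁, hB₂, hB₃, hB₄⟩ := hB
  obtain ⟨hC₁, hC₂, hC₃, hC₄⟩ := hC
  have hAB : A * B = A * C :=
    calc A * B = (A * C * A) * B := by rw [hC₁]
      _ = (A * C)ᵀ * (A * B)ᵀ := by rw [hC₃, hB₃]; simp only [Matrix.mul_assoc]
      _ = (A * B * A * C)ᵀ := by simp only [transpose_mul, Matrix.mul_assoc]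
      _ = A * C := by rw [hB₁, hC₃]
  have hBA : B * A = C * A :=
    calc B * A = B * (A * C * A) := by rw [hC₁]
      _ = (B * A)ᵀ * (C * A)ᵀ := by rw [hC₄, hB₄]; simp only [Matrix.mul_assoc]
      _ = (C * (A * B * A))ᵀ := by simp only [transpose_mul, Matrix.mul_assoc]
      _ = C * A := by rw [hB₁, hC₄]
  calc B = B * A * B := hB₂.symm
    _ = C * A * C := by rw [Matrix.mul_assoc, hAB, ← Matrix.mul_assoc, hBA]
    _ = C := hC₂

theorem IsMoorePenrose.transpose {A : Matrix m n ℝ} {B : Matrix n m ℝ}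
    (h : IsMoorePenrose A B) : IsMoorePenrose Aᵀ Bᵀ := by
  obtain ⟨h₁, h₂, h₃, h₄⟩ := h
  refine ⟨?_, ?_, ?_, ?_⟩
  · rw [← transpose_mul, ← transpose_mul, ← Matrix.mul_assoc, h₁]
  · rw [← transpose_mul, ← transpose_mul, ← Matrix.mul_assoc, h₂]
  · rw [← transpose_mul, transpose_transpose, h₄]
  · rw [← transpose_mul, transpose_transpose, h₃]

theorem mpinv_eq {A : Matrix m n ℝ} {B : Matrix n m ℝ} (h : IsMoorePenrose A B) : mpinv A = B := by
  have hex : ∃ B, IsMoorePenrose A B := ⟨B, h⟩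
  rw [mpinv]
  exact (dif_pos hex).trans (hex.choose_spec.unique h)

section Square

variable {n : Type*}

theorem transpose_eq_star (A : Matrix n n ℝ) : Aᵀ = star A := by
  rw [star_eq_conjTranspose, conjTranspose_eq_transpose_of_trivial]

variable [Fintype n]

theorem IsMoorePenrose.map {F : Type*} [FunLike F (Matrix n n ℝ) (Matrix n n ℝ)]
    [MulHomClass F _ _] [StarHomClass F _ _] {A B : Matrix n n ℝ} (h : IsMoorePenrose A B)
    (φ : F) : IsMoorePenrose (φ A) (φ B) := by
  obtain ⟨h₁, h₂, h₃, h₄⟩ := h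
  simp only [IsMoorePenrose, transpose_eq_star] at *
  simp only [← map_mul, ← map_star, h₁, h₂, h₃, h₄, and_self]

variable [DecidableEq n]

theorem isMoorePenrose_diagonal (d : n → ℝ) : IsMoorePenrose (diagonal d) (diagonal d⁻¹) := by
  have h (x : ℝ) : x⁻¹ * x * x⁻¹ = x⁻¹ := by simpa using mul_inv_mul_cancel x⁻¹
  refine ⟨?_, ?_, ?_, ?_⟩ <;> simp [diagonal_mul_diagonal, h]

theorem IsHermitian.isMoorePenrose_mpinv {M : Matrix n n ℝ} (hM : M.IsHermitian) :
    IsMoorePenrose M (mpinv M) := by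
  obtain ⟨B, hB⟩ : ∃ B, IsMoorePenrose M B := by
    rw [hM.spectral_theorem]
    exact ⟨_, (isMoorePenrose_diagonal _).map _⟩
  rwa [mpinv_eq hB]

theorem IsHermitian.transpose_mpinv {M : Matrix n n ℝ} (hM : M.IsHermitian) :
    (mpinv M)ᵀ = mpinv M := by
  have h := hM.isMoorePenrose_mpinv.transpose
  rw [← conjTranspose_eq_transpose_of_trivial, hM.eq] at h
  exact (mpinv_eq h).symm

end Square

end Penrose

section OrthProj

variable {m : Type*} [Fintype m]

structure IsOrthProj (P : Matrix m m ℝ) (S : Submodule ℝ (m → ℝ)) : Prop where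
  transpose_eq : Pᵀ = P
  mulVec_mem (v : m → ℝ) : P *ᵥ v ∈ S
  mulVec_eq_self {v : m → ℝ} : v ∈ S → P *ᵥ v = v

namespace IsOrthProj

variable {P Q : Matrix m m ℝ} {S : Submodule ℝ (m → ℝ)}

theorem mul_eq_right (hP : IsOrthProj P S) (hQ : IsOrthProj Q S) : P * Q = Q :=
  ext_iff_mulVec.2 fun v => by rw [← mulVec_mulVec, hP.mulVec_eq_self (hQ.mulVec_mem v)]

theorem unique (hP : IsOrthProj P S) (hQ : IsOrthProj Q S) : P = Q :=
  calc P = (Q * P)ᵀ := by rw [hQ.mul_eq_right hP, hP.transpose_eq]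
    _ = P * Q := by rw [transpose_mul, hP.transpose_eq, hQ.transpose_eq]
    _ = Q := hP.mul_eq_right hQ

theorem mulVec_dotProduct (hP : IsOrthProj P S) (v w : m → ℝ) : P *ᵥ v ⬝ᵥ w = v ⬝ᵥ P *ᵥ w := by
  rw [dotProduct_comm, dotProduct_mulVec, ← mulVec_transpose, hP.transpose_eq, dotProduct_comm]

theorem sub_mulVec_dotProduct_eq_zero (hP : IsOrthProj P S) (a : m → ℝ) {s : m → ℝ}
    (hs : s ∈ S) : (a - P *ᵥ a) ⬝ᵥ s = 0 := by
  rw [sub_dotProduct, hP.mulVec_dotProduct, hP.mulVec_eq_self hs, sub_self]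

theorem mulVec_eq_zero (hP : IsOrthProj P S) {r : m → ℝ} (hr : ∀ s ∈ S, r ⬝ᵥ s = 0) :
    P *ᵥ r = 0 := by
  rw [← dotProduct_self_eq_zero, hP.mulVec_dotProduct, hr _ (hP.mulVec_mem _)]

/-- When `r = 0` the added term vanishes, as `(r ⬝ᵥ r)⁻¹ = 0`. -/
theorem add_vecMulVec (hP : IsOrthProj P S) {r : m → ℝ} (hr : ∀ s ∈ S, r ⬝ᵥ s = 0) :
    IsOrthProj (P + (r ⬝ᵥ r)⁻¹ • vecMulVec r r) ((ℝ ∙ r) ⊔ S) := by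
  have hmulVec (v : m → ℝ) :
      (P + (r ⬝ᵥ r)⁻¹ • vecMulVec r r) *ᵥ v = P *ᵥ v + ((r ⬝ᵥ r)⁻¹ * (r ⬝ᵥ v)) • r := by
    rw [add_mulVec, smul_mulVec, vecMulVec_mulVec, op_smul_eq_smul, smul_smul]
  refine ⟨?_, fun v => ?_, fun {v} hv => ?_⟩
  · rw [transpose_add, transpose_smul, transpose_vecMulVec, hP.transpose_eq]
  · rw [hmulVec]
    exact add_mem (Submodule.mem_sup_right (hP.mulVec_mem v))
      (Submodule.mem_sup_left (Submodule.smul_mem _ _ (Submodule.mem_span_singleton_self r)))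
  · obtain ⟨_, hx, s, hs, rfl⟩ := Submodule.mem_sup.1 hv
    obtain ⟨t, rfl⟩ := Submodule.mem_span_singleton.1 hx
    have hrr : ((r ⬝ᵥ r)⁻¹ * (r ⬝ᵥ r)) • r = r := by
      rcases eq_or_ne r 0 with rfl | h
      · simp
      · rw [inv_mul_cancel₀ (dotProduct_self_eq_zero.not.2 h), one_smul]
    rw [hmulVec, mulVec_add, mulVec_smul, hP.mulVec_eq_zero hr, hP.mulVec_eq_self hs,
      dotProduct_add, dotProduct_smul, hr s hs, smul_zero, zero_add, add_zero, smul_eq_mul,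
      mul_left_comm, mul_smul, hrr, add_comm]

end IsOrthProj

end OrthProj

section ColProj

variable {m n ι : Type*} [Fintype m]

theorem isHermitian_transpose_mul_self (C : Matrix m ι ℝ) : (Cᵀ * C).IsHermitian := by
  simpa using isHermitian_conjTranspose_mul_self C

variable [Fintype ι]

noncomputable def colProj (C : Matrix m ι ℝ) : Matrix m m ℝ := C * mpinv (Cᵀ * C) * Cᵀ

theorem mul_mpinv_transpose_mul_self (C : Matrix m ι ℝ) : C * mpinv (Cᵀ * C) * (Cᵀ * C) = C := by
  classical
  set M := Cᵀ * C
  have hM : M.IsHermitian := isHermitian_transpose_mul_self C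
  obtain ⟨h₁, -, -, -⟩ := hM.isMoorePenrose_mpinv
  -- `D := mpinv M * M - 1` satisfies `M * D = 0`, hence `C * D = 0` as `ker (Cᵀ * C) = ker C`.
  suffices (mpinv M * M - 1)ᵀ * Cᵀ = 0 by
    rwa [← transpose_eq_zero, transpose_mul, transpose_transpose, transpose_transpose,
      Matrix.mul_sub, Matrix.mul_one, ← Matrix.mul_assoc, sub_eq_zero] at this
  rw [← conjTranspose_eq_transpose_of_trivial C, ← mul_conjTranspose_mul_self_eq_zero,
    conjTranspose_eq_transpose_of_trivial]
  calc (mpinv M * M - 1)ᵀ * M = (M * (mpinv M * M - 1))ᵀ := by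
        rw [transpose_mul, ← conjTranspose_eq_transpose_of_trivial M, hM.eq]
    _ = 0 := by
      rw [Matrix.mul_sub, ← Matrix.mul_assoc, h₁, Matrix.mul_one, sub_self, transpose_zero]

theorem isOrthProj_colProj (C : Matrix m ι ℝ) :
    IsOrthProj (colProj C) (Submodule.span ℝ (Set.range C.col)) := by
  classical
  have hM := isHermitian_transpose_mul_self C
  rw [← range_mulVecLin]
  refine ⟨?_, fun v => ⟨(mpinv (Cᵀ * C) * Cᵀ) *ᵥ v, ?_⟩, ?_⟩
  · rw [colProj, transpose_mul, transpose_mul, hM.transpose_mpinv, transpose_transpose,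
      Matrix.mul_assoc]
  · simp [colProj, Matrix.mul_assoc]
  · rintro _ ⟨w, rfl⟩
    rw [mulVecLin_apply, colProj, mulVec_mulVec, Matrix.mul_assoc, mul_mpinv_transpose_mul_self]

theorem isOrthProj_colProj_submatrix (B : Matrix m n ℝ) (f : ι → n) :
    IsOrthProj (colProj (B.submatrix id f)) (Submodule.span ℝ (B.col '' Set.range f)) := by
  rw [← Set.range_comp]
  exact isOrthProj_colProj _

theorem transpose_mul_self_sub_submatrix_mul_mpinv [DecidableEq m] (B : Matrix m n ℝ)
    (f : ι → n) :
    Bᵀ * B - (Bᵀ * B).submatrix id f * mpinv ((Bᵀ * B).submatrix f f) * (Bᵀ * B).submatrix f id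
      = Bᵀ * (1 - colProj (B.submatrix id f)) * B := by
  simp [colProj, submatrix_mul _ _ _ id _ Function.bijective_id, ← transpose_submatrix,
    Matrix.mul_sub, Matrix.sub_mul, Matrix.mul_assoc]

end ColProj

theorem IsOrthProj.trace_sup_span_singleton {m n : Type*} [Fintype m] [DecidableEq m] [Fintype n]
    {P P' : Matrix m m ℝ} {S : Submodule ℝ (m → ℝ)} (B : Matrix m n ℝ) (i : n)
    (hP : IsOrthProj P S) (hP' : IsOrthProj P' ((ℝ ∙ B.col i) ⊔ S))
    {β : n → ℝ} (hβ : β = (Bᵀ * (1 - P) * B).col i) :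
    trace (Bᵀ * (1 - P') * B) =
      trace (Bᵀ * (1 - P) * B) - (if 0 < β i then (∑ j, β j ^ 2) / β i else 0) := by
  classical
  set a := B.col i
  set r := a - P *ᵥ a
  have hr (s : m → ℝ) (hs : s ∈ S) : r ⬝ᵥ s = 0 := hP.sub_mulVec_dotProduct_eq_zero a hs
  have hP'_eq : P' = P + (r ⬝ᵥ r)⁻¹ • vecMulVec r r := by
    refine hP'.unique ?_
    rw [← Submodule.span_singleton_sub_sup a (hP.mulVec_mem a)]
    exact hP.add_vecMulVec hr
  subst hP'_eq
  have hβr : β = Bᵀ *ᵥ r := by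
    rw [hβ, ← mulVec_single_one, ← mulVec_mulVec, ← mulVec_mulVec, mulVec_single_one, sub_mulVec,
      one_mulVec]
  have hβi : β i = r ⬝ᵥ r :=
    calc β i = (r + P *ᵥ a) ⬝ᵥ r := by rw [hβr, sub_add_cancel]; rfl
      _ = r ⬝ᵥ r := by
        rw [add_dotProduct, dotProduct_comm (P *ᵥ a), hr _ (hP.mulVec_mem a), add_zero]
  have htrace : trace (Bᵀ * vecMulVec r r * B) = ∑ j, β j ^ 2 := by
    rw [mul_vecMulVec, vecMulVec_mul, trace_vecMulVec, ← mulVec_transpose, ← hβr]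
    simp [dotProduct, sq]
  rw [sub_add_eq_sub_sub, Matrix.mul_sub, Matrix.sub_mul, Matrix.mul_smul, Matrix.smul_mul,
    trace_sub, trace_smul, htrace, smul_eq_mul, hβi]
  split_ifs with hpos
  · rw [div_eq_inv_mul]
  · rw [le_antisymm (not_lt.1 hpos) (by simpa using dotProduct_self_star_nonneg r)]
    simp

end Matrix

theorem crossMoment_self_eq_gram {Ω ι : Type*} [MeasurableSpace Ω] (μ : Measure Ω)
    (X : Ω → ι → ℝ) (hX : ∀ i, MemLp (fun ω => X ω i) 2 μ) :
    crossMoment μ X X = gram ℝ fun i => MemLp.toLp _ (hX i) := by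
  ext i j
  rw [crossMoment, gram, of_apply, of_apply, L2.inner_def]
  refine integral_congr_ae ?_
  filter_upwards [(hX i).coeFn_toLp, (hX j).coeFn_toLp] with ω hi hj
  simp [hi, hj, mul_comm]

theorem trace_residual_update_general {Ω : Type*} [MeasurableSpace Ω] (μ : Measure Ω)
    {p : ℕ}
    (X : Ω → Fin p → ℝ) (hX : ∀ i, MemLp (fun ω => X ω i) 2 μ)
    (Sig : Matrix (Fin p) (Fin p) ℝ) (hSig : Sig = crossMoment μ X X)
    (U : Finset (Fin p)) (i : Fin p)
    (resid : Finset (Fin p) → Matrix (Fin p) (Fin p) ℝ)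
    (hresid : ∀ V : Finset (Fin p),
      resid V = Sig - Sig.submatrix id (fun j : ↥V => (j : Fin p)) *
        mpinv (Sig.submatrix (fun j : ↥V => (j : Fin p)) (fun j : ↥V => (j : Fin p))) *
        Sig.submatrix (fun j : ↥V => (j : Fin p)) id)
    (β : Fin p → ℝ) (hβ : β = fun j => resid U j i) :
    Matrix.trace (resid (insert i U)) =
      Matrix.trace (resid U) -
        (if 0 < β i then (∑ j, β j ^ 2) / β i else 0) := by
  obtain ⟨B, rfl⟩ : ∃ B : Matrix (Fin p) (Fin p) ℝ, Sig = Bᵀ * B := by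
    open scoped MatrixOrder in
    obtain ⟨B, hB⟩ := CStarAlgebra.nonneg_iff_eq_star_mul_self.mp
      (hSig ▸ crossMoment_self_eq_gram μ X hX ▸ posSemidef_gram ℝ _).nonneg
    exact ⟨B, by rw [hB, ← transpose_eq_star]⟩
  have hP (V : Finset (Fin p)) := isOrthProj_colProj_submatrix B (fun j : ↥V => (j : Fin p))
  simp only [hresid, transpose_mul_self_sub_submatrix_mul_mpinv] at hβ ⊢
  refine (hP U).trace_sup_span_singleton B i ?_ hβ
  have hrange (V : Finset (Fin p)) : Set.range (fun j : ↥V => (j : Fin p)) = V := by simp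
  simpa only [hrange, Finset.coe_insert, Set.image_insert_eq, Submodule.span_insert]
    using hP (insert i U)

/-- **Trace residual update.** For the covariance `Σ` of a mean-zero
square-integrable random vector, `U ⊂ [p]`, `i ∉ U`, and
`β = Σ_{•i} − Σ_{•U} Σ_U⁺ Σ_{U,i}`, one has
`Tr(Σ − Σ_{•,U∪{i}} Σ_{U∪{i}}⁺ Σ_{U∪{i},•}) = Tr(Σ − Σ_{•U} Σ_U⁺ Σ_{U•}) −
(‖β‖₂²/β_i)·1{β_i > 0}`. -/
theorem trace_residual_update {Ω : Type*} [MeasurableSpace Ω] (μ : Measure Ω)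
    [IsProbabilityMeasure μ] {p : ℕ}
    (X : Ω → Fin p → ℝ) (hX : ∀ i, MemLp (fun ω => X ω i) 2 μ)
    (hmean : ∀ i, ∫ ω, X ω i ∂μ = 0)
    (Sig : Matrix (Fin p) (Fin p) ℝ) (hSig : Sig = crossMoment μ X X)
    (U : Finset (Fin p)) (i : Fin p) (hi : i ∉ U)
    (resid : Finset (Fin p) → Matrix (Fin p) (Fin p) ℝ)
    (hresid : ∀ V : Finset (Fin p),
      resid V = Sig - Sig.submatrix id (fun j : ↥V => (j : Fin p)) *
        mpinv (Sig.submatrix (fun j : ↥V => (j : Fin p)) (fun j : ↥V => (j : Fin p))) *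
        Sig.submatrix (fun j : ↥V => (j : Fin p)) id)
    (β : Fin p → ℝ) (hβ : β = fun j => resid U j i) :
    Matrix.trace (resid (insert i U)) =
      Matrix.trace (resid U) -
        (if 0 < β i then (∑ j, β j ^ 2) / β i else 0) :=
  trace_residual_update_general μ X hX Sig hSig U i resid hresid β hβ
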